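/- arXiv:2202.04539 — 4 statements merged into one kernel-verified Lean document; each statement's English description precedes it below -/
import Mathlib

section
/- Let E be a real normed vector space and λ ∈ (0,1). Then for all e, s ∈ E and both ℓ ∈ {0,1}, (λ/(2+λ)) · (‖e‖ + ‖s‖) ≤ W̃(ℓ, e, s) ≤ ‖e‖ + ‖s‖. In particular W̃ is sandwiched between two class-K∞ functions of ‖e‖ + ‖s‖. -/
/-- The candidate hybrid storage function `W̃` from the paper:
`W̃(0,e,s) = max {‖e‖, ‖e+s‖}` and `W̃(1,e,s) = max {λ‖e‖, ‖e+s‖}`. -/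
noncomputable def Wtilde {E : Type*} [NormedAddCommGroup E] (lam : ℝ) (l : Fin 2)
    (e s : E) : ℝ :=
  if l = 0 then max ‖e‖ ‖e + s‖ else max (lam * ‖e‖) ‖e + s‖

/-- `W̃` is sandwiched: `(λ/(2+λ))(‖e‖+‖s‖) ≤ W̃(ℓ,e,s) ≤ ‖e‖+‖s‖` for both modes `ℓ`. -/
theorem stmt_2 {E : Type*} [NormedAddCommGroup E] [NormedSpace ℝ E]
    (lam : ℝ) (hlam : lam ∈ Set.Ioo (0 : ℝ) 1) :
    ∀ (e s : E) (l : Fin 2),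
      lam / (2 + lam) * (‖e‖ + ‖s‖) ≤ Wtilde lam l e s ∧
      Wtilde lam l e s ≤ ‖e‖ + ‖s‖ := by
  obtain ⟨h0, h1⟩ := hlam
  intro e s l
  have hes : ‖e + s‖ ≤ ‖e‖ + ‖s‖ := norm_add_le e s
  have hs : ‖s‖ ≤ ‖e + s‖ + ‖e‖ := by
    have := norm_add_le (e + s) (-e)
    simpa using this
  have he : (0:ℝ) ≤ ‖e‖ := norm_nonneg e
  have hpos : (0:ℝ) < 2 + lam := by linarith
  have key : lam / (2 + lam) * (‖e‖ + ‖s‖) ≤ max (lam * ‖e‖) ‖e + s‖ := by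
    set M := max (lam * ‖e‖) ‖e + s‖ with hM
    have h2 : lam * ‖e‖ ≤ M := le_max_left _ _
    have h3 : ‖e + s‖ ≤ M := le_max_right _ _
    rw [div_mul_eq_mul_div, div_le_iff₀ hpos]
    nlinarith
  constructor
  · fin_cases l <;> simp only [Wtilde, if_true, if_false, Fin.isValue] <;>
      [skip; exact key]
    · refine key.trans (max_le_max ?_ le_rfl)
      nlinarith
  · fin_cases l <;> simp only [Wtilde, if_true, if_false, Fin.isValue] <;>
      refine max_le ?_ hes
    · linarith [norm_nonneg s]
    · nlinarith [norm_nonneg s]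
end

section
/- Let E be a real normed vector space, λ ∈ (0,1), ℓ ∈ {0,1}, s ∈ E, L ≥ 0 and H ≥ 0. Let e : ℝ → E be differentiable at t with derivative g = e'(t) satisfying ‖g‖ ≤ L‖e(t)‖ + H. Then the upper right Dini derivative of the function τ ↦ W̃(ℓ, e(τ), s) at t, i.e. limsup_{h→0⁺} (W̃(ℓ, e(t+h), s) − W̃(ℓ, e(t), s))/h, is at most L_ℓ · W̃(ℓ, e(t), s) + H, where L₀ = L and L₁ = L/λ. (This is the trajectory-wise form of condition (5) for the candidate storage function.) -/
open Filter

lemma Wtilde_lip {E : Type*} [NormedAddCommGroup E] {lam : ℝ}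
    (hlam : lam ∈ Set.Ioo (0 : ℝ) 1) (l : Fin 2) (s x y : E) :
    Wtilde lam l y s ≤ Wtilde lam l x s + ‖y - x‖ := by
  have hl1 : lam ≤ 1 := hlam.2.le
  have hl0 : 0 ≤ lam := hlam.1.le
  have h1 : ‖y‖ ≤ ‖x‖ + ‖y - x‖ := by
    have := norm_sub_norm_le y x; linarith
  have h2 : ‖y + s‖ ≤ ‖x + s‖ + ‖y - x‖ := by
    have := norm_sub_norm_le (y + s) (x + s)
    have he : (y + s) - (x + s) = y - x := by abel
    rw [he] at this; linarith
  unfold Wtilde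
  split_ifs with h
  · exact max_le (by nlinarith [le_max_left ‖x‖ ‖x + s‖])
      (by nlinarith [le_max_right ‖x‖ ‖x + s‖])
  · refine max_le ?_ (by nlinarith [le_max_right (lam * ‖x‖) ‖x + s‖])
    have hm : lam * ‖y‖ ≤ lam * ‖x‖ + lam * ‖y - x‖ := by nlinarith
    have h3 : lam * ‖y - x‖ ≤ ‖y - x‖ := by nlinarith [norm_nonneg (y - x)]
    nlinarith [le_max_left (lam * ‖x‖) ‖x + s‖]

/-- Trajectory-wise form of condition (5): along a differentiable trajectory `e(·)` with
`‖e'(t)‖ ≤ L‖e(t)‖ + H`, the upper right Dini derivative of `τ ↦ W̃(ℓ, e(τ), s)` at `t`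
is at most `L_ℓ W̃(ℓ, e(t), s) + H`, where `L₀ = L` and `L₁ = L/λ`. -/
theorem stmt_6 {E : Type*} [NormedAddCommGroup E] [NormedSpace ℝ E]
    (lam : ℝ) (hlam : lam ∈ Set.Ioo (0 : ℝ) 1) (l : Fin 2) (s : E)
    (L H : ℝ) (hL : 0 ≤ L) (hH : 0 ≤ H)
    (e : ℝ → E) (g : E) (t : ℝ) (hdiff : HasDerivAt e g t)
    (hg : ‖g‖ ≤ L * ‖e t‖ + H) :
    Filter.limsup (fun h : ℝ => (Wtilde lam l (e (t + h)) s - Wtilde lam l (e t) s) / h)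
        (nhdsWithin 0 (Set.Ioi 0))
      ≤ (if l = 0 then L else L / lam) * Wtilde lam l (e t) s + H := by
  set F := fun h : ℝ => (Wtilde lam l (e (t + h)) s - Wtilde lam l (e t) s) / h with hF
  set Q := fun h : ℝ => ‖e (t + h) - e t‖ / h with hQ
  -- the map h ↦ t + h
  have hmap : Tendsto (fun h : ℝ => t + h) (nhdsWithin 0 (Set.Ioi 0)) (nhdsWithin t {t}ᶜ) := by
    apply tendsto_nhdsWithin_of_tendsto_nhds_of_eventually_within
    · have h0 : Tendsto (fun h : ℝ => t + h) (nhds 0) (nhds (t + 0)) :=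
        (continuous_const.add continuous_id).tendsto 0
      simpa using h0.mono_left nhdsWithin_le_nhds
    · filter_upwards [self_mem_nhdsWithin] with h hh
      simp only [Set.mem_compl_iff, Set.mem_singleton_iff]
      intro hc
      have h0 : h = 0 := by linarith [hc]
      exact absurd h0 (ne_of_gt (Set.mem_Ioi.mp hh))
  have hslope : Tendsto (slope e t) (nhdsWithin t {t}ᶜ) (nhds g) :=
    hasDerivAt_iff_tendsto_slope.mp hdiff
  have hQtendsto : Tendsto Q (nhdsWithin 0 (Set.Ioi 0)) (nhds ‖g‖) := by
    have hcomp : Tendsto (fun h : ℝ => ‖slope e t (t + h)‖)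
        (nhdsWithin 0 (Set.Ioi 0)) (nhds ‖g‖) :=
      ((continuous_norm.tendsto g).comp (hslope.comp hmap))
    refine hcomp.congr' ?_
    filter_upwards [self_mem_nhdsWithin] with h hh
    have hh0 : (0:ℝ) < h := hh
    simp only [slope_def_module]
    rw [norm_smul, add_sub_cancel_left, Real.norm_eq_abs, abs_inv, abs_of_pos hh0]
    rw [hQ]
    ring
  -- F ≤ Q eventually and -Q ≤ F eventually
  have hFQ : F ≤ᶠ[nhdsWithin 0 (Set.Ioi 0)] Q := by
    filter_upwards [self_mem_nhdsWithin] with h hh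
    have hh0 : (0:ℝ) < h := hh
    have hlip := Wtilde_lip hlam l s (e t) (e (t + h))
    have : Wtilde lam l (e (t + h)) s - Wtilde lam l (e t) s ≤ ‖e (t + h) - e t‖ := by
      linarith
    exact div_le_div_of_nonneg_right this hh0.le |>.trans_eq rfl
  have hQF : (fun h => -Q h) ≤ᶠ[nhdsWithin 0 (Set.Ioi 0)] F := by
    filter_upwards [self_mem_nhdsWithin] with h hh
    have hh0 : (0:ℝ) < h := hh
    have hlip := Wtilde_lip hlam l s (e (t + h)) (e t)
    rw [norm_sub_rev] at hlip
    have hnum : -‖e (t + h) - e t‖ ≤ Wtilde lam l (e (t + h)) s - Wtilde lam l (e t) s := by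
      linarith
    have := div_le_div_of_nonneg_right hnum hh0.le
    simpa [neg_div] using this
  -- limsup F ≤ ‖g‖
  have h1 : limsup F (nhdsWithin 0 (Set.Ioi 0)) ≤ ‖g‖ := by
    have hbQ : IsBoundedUnder (· ≤ ·) (nhdsWithin 0 (Set.Ioi 0)) Q :=
      hQtendsto.isBoundedUnder_le
    have hbF : IsBoundedUnder (· ≥ ·) (nhdsWithin 0 (Set.Ioi 0)) F := by
      have : IsBoundedUnder (· ≥ ·) (nhdsWithin 0 (Set.Ioi 0)) (fun h => -Q h) :=
        (hQtendsto.neg).isBoundedUnder_ge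
      exact this.mono_ge hQF
    have hcb : IsCoboundedUnder (· ≤ ·) (nhdsWithin 0 (Set.Ioi 0)) F :=
      hbF.isCoboundedUnder_le
    calc limsup F (nhdsWithin 0 (Set.Ioi 0))
        ≤ limsup Q (nhdsWithin 0 (Set.Ioi 0)) := limsup_le_limsup hFQ hcb hbQ
      _ = ‖g‖ := hQtendsto.limsup_eq
  refine h1.trans (hg.trans ?_)
  have key : L * ‖e t‖ ≤ (if l = 0 then L else L / lam) * Wtilde lam l (e t) s := by
    unfold Wtilde
    split_ifs with h
    · exact mul_le_mul_of_nonneg_left (le_max_left _ _) hL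
    · have h0 : lam * ‖e t‖ ≤ max (lam * ‖e t‖) ‖e t + s‖ := le_max_left _ _
      have hlam0 : 0 < lam := hlam.1
      calc L * ‖e t‖ = (L / lam) * (lam * ‖e t‖) := by field_simp
        _ ≤ (L / lam) * max (lam * ‖e t‖) ‖e t + s‖ :=
            mul_le_mul_of_nonneg_left h0 (div_nonneg hL hlam0.le)
  linarith
end

section
/- Let ε ∈ ℝ, γ > 0, L ∈ ℝ and T > 0. Let v, w, φ : [0,T] → ℝ be differentiable and h : [0,T] → ℝ, with w(t) ≥ 0 and φ(t) ≥ 0 for all t ∈ [0,T]. Assume that for all t ∈ [0,T]: (i) v'(t) ≤ −ε v(t) − h(t)² + γ² w(t)², (ii) (w²)'(t) ≤ 2L w(t)² + 2 h(t) w(t), and (iii) φ'(t) = −2(L + ε/2) φ(t) − γ (φ(t)² + 1). Then the function u(t) := v(t) + γ φ(t) w(t)² satisfies u(t) ≤ e^{−εt} u(0) for all t ∈ [0,T]. (This is the flow-segment decrease estimate (12) for the hybrid Lyapunov function U(ξ) = Ṽ(x) + γ_ℓ φ_ℓ(τ) W̃²(ℓ,e,s) in Proposition 2.1, written along a single trajectory.)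 -/
/-!
Along the flow, `u = v + γ φ w²` satisfies `u' ≤ -ε u`: after inserting (i), (ii) (weighted by
`γ φ ≥ 0`) and the Riccati equation (iii), the `L`-terms and the `γ² w²`-terms cancel and what
remains of `u' + ε u` is `-(h - γ φ w)²`. Grönwall's inequality then gives `u t ≤ e^{-ε t} u 0`.
-/

open Set Real

theorem le_exp_mul_of_hasDerivAt_le_mul {u u' : ℝ → ℝ} {K a b : ℝ}
    (hu : ∀ t ∈ Icc a b, HasDerivAt u (u' t) t) (hbound : ∀ t ∈ Icc a b, u' t ≤ K * u t) :
    ∀ t ∈ Icc a b, u t ≤ exp (K * (t - a)) * u a := by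
  intro t ht
  have hgronwall := le_gronwallBound_of_liminf_deriv_right_le (δ := u a) (ε := 0)
    (fun s hs => (hu s hs).continuousAt.continuousWithinAt)
    (fun s hs r hr => by
      simpa only [slope_def_module, smul_eq_mul] using
        (hu s (Ico_subset_Icc_self hs)).hasDerivWithinAt.liminf_right_slope_le hr)
    le_rfl (fun s hs => by simpa only [add_zero] using hbound s (Ico_subset_Icc_self hs)) t ht
  rwa [gronwallBound_ε0, mul_comm] at hgronwall

def hybridLyapunov (γ : ℝ) (v φ w : ℝ → ℝ) (t : ℝ) : ℝ :=
  v t + γ * φ t * w t ^ 2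

theorem hasDerivAt_hybridLyapunov {γ t v' φ' w' : ℝ} {v φ w : ℝ → ℝ}
    (hv : HasDerivAt v v' t) (hφ : HasDerivAt φ φ' t) (hw : HasDerivAt w w' t) :
    HasDerivAt (hybridLyapunov γ v φ w)
      (v' + γ * (φ' * w t ^ 2 + φ t * (2 * w t * w'))) t := by
  have hsq : HasDerivAt (fun s => w s ^ 2) (2 * w t * w') t :=
    (hw.fun_pow 2).congr_deriv (by norm_num)
  unfold hybridLyapunov
  simpa only [mul_assoc] using hv.fun_add ((hφ.fun_mul hsq).const_mul γ)

theorem hybridLyapunov_deriv_le {ε γ L v w φ h v' w' φ' : ℝ} (hγφ : 0 ≤ γ * φ)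
    (hi : v' ≤ -ε * v - h ^ 2 + γ ^ 2 * w ^ 2)
    (hii : 2 * w * w' ≤ 2 * L * w ^ 2 + 2 * h * w)
    (hiii : φ' = -2 * (L + ε / 2) * φ - γ * (φ ^ 2 + 1)) :
    v' + γ * (φ' * w ^ 2 + φ * (2 * w * w')) ≤ -ε * (v + γ * φ * w ^ 2) := by
  calc v' + γ * (φ' * w ^ 2 + φ * (2 * w * w'))
      ≤ (-ε * v - h ^ 2 + γ ^ 2 * w ^ 2) + γ * φ' * w ^ 2
          + γ * φ * (2 * L * w ^ 2 + 2 * h * w) := by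
        linarith [mul_le_mul_of_nonneg_left hii hγφ]
    _ = -ε * (v + γ * φ * w ^ 2) - (h - γ * φ * w) ^ 2 := by rw [hiii]; ring
    _ ≤ -ε * (v + γ * φ * w ^ 2) := sub_le_self _ (sq_nonneg _)

theorem stmt_8_general (ε γ L T : ℝ) (hγ : 0 < γ)
    (v w φ h v' w' φ' : ℝ → ℝ)
    (hvd : ∀ t ∈ Set.Icc 0 T, HasDerivAt v (v' t) t)
    (hwd : ∀ t ∈ Set.Icc 0 T, HasDerivAt w (w' t) t)
    (hφd : ∀ t ∈ Set.Icc 0 T, HasDerivAt φ (φ' t) t)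
    (hφ0 : ∀ t ∈ Set.Icc 0 T, 0 ≤ φ t)
    (hi : ∀ t ∈ Set.Icc 0 T, v' t ≤ -ε * v t - (h t) ^ 2 + γ ^ 2 * (w t) ^ 2)
    (hii : ∀ t ∈ Set.Icc 0 T, 2 * w t * w' t ≤ 2 * L * (w t) ^ 2 + 2 * h t * w t)
    (hiii : ∀ t ∈ Set.Icc 0 T, φ' t = -2 * (L + ε / 2) * φ t - γ * ((φ t) ^ 2 + 1)) :
    ∀ t ∈ Set.Icc 0 T,
      v t + γ * φ t * (w t) ^ 2 ≤ Real.exp (-ε * t) * (v 0 + γ * φ 0 * (w 0) ^ 2) := by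
  intro t ht
  have hdecay := le_exp_mul_of_hasDerivAt_le_mul (K := -ε)
    (fun s hs => hasDerivAt_hybridLyapunov (γ := γ) (hvd s hs) (hφd s hs) (hwd s hs))
    (fun s hs => hybridLyapunov_deriv_le (mul_nonneg hγ.le (hφ0 s hs)) (hi s hs) (hii s hs)
      (hiii s hs)) t ht
  simpa only [hybridLyapunov, sub_zero] using hdecay

/-- Flow-segment decrease estimate (12) for the hybrid Lyapunov function
`U(ξ) = Ṽ(x) + γ_ℓ φ_ℓ(τ) W̃²(ℓ,e,s)`, along a single trajectory: with
(i) `v' ≤ −εv − h² + γ²w²`, (ii) `(w²)' ≤ 2Lw² + 2hw` (here `(w²)' = 2ww'`), and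
(iii) `φ' = −2(L+ε/2)φ − γ(φ²+1)` on `[0,T]`, the function `u = v + γφw²` satisfies
`u(t) ≤ e^{−εt} u(0)` on `[0,T]`. -/
theorem stmt_8 (ε γ L T : ℝ) (hγ : 0 < γ) (hT : 0 < T)
    (v w φ h v' w' φ' : ℝ → ℝ)
    (hvd : ∀ t ∈ Set.Icc 0 T, HasDerivAt v (v' t) t)
    (hwd : ∀ t ∈ Set.Icc 0 T, HasDerivAt w (w' t) t)
    (hφd : ∀ t ∈ Set.Icc 0 T, HasDerivAt φ (φ' t) t)
    (hw0 : ∀ t ∈ Set.Icc 0 T, 0 ≤ w t)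
    (hφ0 : ∀ t ∈ Set.Icc 0 T, 0 ≤ φ t)
    (hi : ∀ t ∈ Set.Icc 0 T, v' t ≤ -ε * v t - (h t) ^ 2 + γ ^ 2 * (w t) ^ 2)
    (hii : ∀ t ∈ Set.Icc 0 T, 2 * w t * w' t ≤ 2 * L * (w t) ^ 2 + 2 * h t * w t)
    (hiii : ∀ t ∈ Set.Icc 0 T, φ' t = -2 * (L + ε / 2) * φ t - γ * ((φ t) ^ 2 + 1)) :
    ∀ t ∈ Set.Icc 0 T,
      v t + γ * φ t * (w t) ^ 2 ≤ Real.exp (-ε * t) * (v 0 + γ * φ 0 * (w 0) ^ 2) :=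
  stmt_8_general ε γ L T hγ v w φ h v' w' φ' hvd hwd hφd hφ0 hi hii hiii
end

section
/- Let ε ∈ ℝ, γ > 0, L ∈ ℝ, T > 0, λ ∈ (0,1), c_U > 0 and c_X > 0. Let v, w, φ : [0,T] → ℝ be differentiable and h : [0,T] → ℝ with v ≥ 0, w ≥ 0, φ ≥ 0 on [0,T], satisfying (i) v'(t) ≤ −ε v(t) − h(t)² + γ² w(t)², (ii) (w²)'(t) ≤ 2L w(t)² + 2 h(t) w(t), and (iii) φ'(t) = −2(L + ε/2) φ(t) − γ (φ(t)² + 1) on [0,T]; assume γ φ(T) ≥ λ² c_U and max{1, e^{−εT}} · (v(0) + γ φ(0) w(0)²) < c_X. Set u(t) := v(t) + γ φ(t) w(t)². Then: (a) u(t) ≤ e^{−εt} u(0) for all t ∈ [0,T]; (b) for every w⁺ ≥ 0 with w⁺ ≤ λ w(T), v(T) + c_U (w⁺)² ≤ e^{−εT} u(0); and (c) v(t) < c_X for all t ∈ [0,T]. (This is a single-trajectory, single-mode reformulation of Proposition 2.1: decrease estimate (12), post-jump estimate (13), and invariance of the sublevel set X.) -/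
/-!
Along the flow, the Riccati equation for `φ` is exactly what makes the cross terms in the
derivative of `u = v + γφw²` complete a square: `u' ≤ -εu - (h - γφw)²`. Hence `e^{εt}u(t)` is
nonincreasing, which is the decrease estimate. At the jump, `γφ(T) ≥ λ²c_U` turns the
storage term `γφ(T)w(T)²` into a bound for `c_U(w⁺)²`, and `v ≤ u` together with
`e^{-εt} ≤ max{1, e^{-εT}}` gives the invariance of the sublevel set.
-/

open Set Real

theorem le_exp_neg_mul_sub_mul_of_hasDerivAt_le {u u' : ℝ → ℝ} {ε a b : ℝ}
    (hu : ∀ t ∈ Icc a b, HasDerivAt u (u' t) t) (hle : ∀ t ∈ Icc a b, u' t ≤ -ε * u t)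
    {t : ℝ} (ht : t ∈ Icc a b) : u t ≤ exp (-ε * (t - a)) * u a := by
  have hg : ∀ s ∈ Icc a b,
      HasDerivAt (fun s => exp (ε * s) * u s) (exp (ε * s) * (ε * u s + u' s)) s := by
    intro s hs
    have he : HasDerivAt (fun s => exp (ε * s)) (exp (ε * s) * ε) s := by
      simpa using ((hasDerivAt_id s).const_mul ε).exp
    exact (he.mul (hu s hs)).congr_deriv (by ring)
  have hanti : AntitoneOn (fun s => exp (ε * s) * u s) (Icc a b) := by
    refine antitoneOn_of_hasDerivWithinAt_nonpos (convex_Icc a b)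
      (fun s hs => (hg s hs).continuousAt.continuousWithinAt)
      (fun s hs => (hg s (interior_subset hs)).hasDerivWithinAt) fun s hs => ?_
    have hs' := interior_subset hs
    nlinarith [exp_pos (ε * s), hle s hs']
  have hmono : exp (ε * t) * u t ≤ exp (ε * a) * u a :=
    hanti ⟨le_rfl, ht.1.trans ht.2⟩ ht ht.1
  have hsplit : exp (ε * a) = exp (ε * t) * exp (-ε * (t - a)) := by
    rw [← exp_add]; ring_nf
  rw [hsplit, mul_assoc] at hmono
  exact le_of_mul_le_mul_left hmono (exp_pos _)

theorem HasDerivAt.add_const_mul_mul_sq {v w φ : ℝ → ℝ} {v' w' φ' γ t : ℝ}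
    (hv : HasDerivAt v v' t) (hw : HasDerivAt w w' t) (hφ : HasDerivAt φ φ' t) :
    HasDerivAt (fun s => v s + γ * φ s * w s ^ 2)
      (v' + γ * (φ' * w t ^ 2 + φ t * (2 * w t * w'))) t := by
  have hw2 : HasDerivAt (fun s => w s ^ 2) (2 * w t * w') t := by
    simpa [mul_comm, mul_left_comm] using hw.fun_pow 2
  simpa [mul_assoc] using hv.fun_add ((hφ.fun_mul hw2).const_mul γ)

theorem lyapunov_deriv_le_neg_mul_sub_sq {ε γ L v w φ h v' w' φ' : ℝ} (hγφ : 0 ≤ γ * φ)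
    (hi : v' ≤ -ε * v - h ^ 2 + γ ^ 2 * w ^ 2)
    (hii : 2 * w * w' ≤ 2 * L * w ^ 2 + 2 * h * w)
    (hiii : φ' = -2 * (L + ε / 2) * φ - γ * (φ ^ 2 + 1)) :
    v' + γ * (φ' * w ^ 2 + φ * (2 * w * w'))
      ≤ -ε * (v + γ * φ * w ^ 2) - (h - γ * φ * w) ^ 2 := by
  have hcross := mul_le_mul_of_nonneg_left hii hγφ
  subst hiii
  linear_combination hi + hcross

theorem mul_sq_le_of_le_mul {cU lam γφ w wplus : ℝ} (hcU : 0 ≤ cU)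
    (hwplus : 0 ≤ wplus) (hle : wplus ≤ lam * w) (htrans : lam ^ 2 * cU ≤ γφ) :
    cU * wplus ^ 2 ≤ γφ * w ^ 2 := by
  have hsq : wplus ^ 2 ≤ lam ^ 2 * w ^ 2 := by
    rw [← mul_pow]; exact pow_le_pow_left₀ hwplus hle 2
  calc cU * wplus ^ 2 ≤ cU * (lam ^ 2 * w ^ 2) := mul_le_mul_of_nonneg_left hsq hcU
    _ = lam ^ 2 * cU * w ^ 2 := by ring
    _ ≤ γφ * w ^ 2 := mul_le_mul_of_nonneg_right htrans (sq_nonneg w)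

theorem exp_neg_mul_le_max_one {ε T t : ℝ} (ht : t ∈ Icc 0 T) :
    exp (-ε * t) ≤ max 1 (exp (-ε * T)) := by
  rcases le_or_gt 0 ε with hε | hε
  · exact le_max_of_le_left (exp_le_one_iff.2 (by nlinarith [ht.1]))
  · exact le_max_of_le_right (exp_le_exp.2 (by nlinarith [ht.2]))

theorem stmt_12_general (ε γ L T lam cU cX : ℝ) (hγ : 0 < γ) (hT : 0 < T)
    (hcU : 0 < cU)
    (v w φ h v' w' φ' : ℝ → ℝ)
    (hvd : ∀ t ∈ Set.Icc 0 T, HasDerivAt v (v' t) t)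
    (hwd : ∀ t ∈ Set.Icc 0 T, HasDerivAt w (w' t) t)
    (hφd : ∀ t ∈ Set.Icc 0 T, HasDerivAt φ (φ' t) t)
    (hv0 : ∀ t ∈ Set.Icc 0 T, 0 ≤ v t)
    (hφ0 : ∀ t ∈ Set.Icc 0 T, 0 ≤ φ t)
    (hi : ∀ t ∈ Set.Icc 0 T, v' t ≤ -ε * v t - (h t) ^ 2 + γ ^ 2 * (w t) ^ 2)
    (hii : ∀ t ∈ Set.Icc 0 T, 2 * w t * w' t ≤ 2 * L * (w t) ^ 2 + 2 * h t * w t)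
    (hiii : ∀ t ∈ Set.Icc 0 T, φ' t = -2 * (L + ε / 2) * φ t - γ * ((φ t) ^ 2 + 1))
    (htrans : lam ^ 2 * cU ≤ γ * φ T)
    (hset : max 1 (Real.exp (-ε * T)) * (v 0 + γ * φ 0 * (w 0) ^ 2) < cX) :
    (∀ t ∈ Set.Icc 0 T,
        v t + γ * φ t * (w t) ^ 2
          ≤ Real.exp (-ε * t) * (v 0 + γ * φ 0 * (w 0) ^ 2)) ∧
    (∀ wplus : ℝ, 0 ≤ wplus → wplus ≤ lam * w T →
        v T + cU * wplus ^ 2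
          ≤ Real.exp (-ε * T) * (v 0 + γ * φ 0 * (w 0) ^ 2)) ∧
    (∀ t ∈ Set.Icc 0 T, v t < cX) := by
  have hγφ : ∀ t ∈ Icc 0 T, 0 ≤ γ * φ t := fun t ht => mul_nonneg hγ.le (hφ0 t ht)
  have hdecrease : ∀ t ∈ Icc 0 T,
      v t + γ * φ t * w t ^ 2 ≤ exp (-ε * t) * (v 0 + γ * φ 0 * w 0 ^ 2) := by
    intro t ht
    simpa using le_exp_neg_mul_sub_mul_of_hasDerivAt_le
      (fun s hs => (hvd s hs).add_const_mul_mul_sq (γ := γ) (hwd s hs) (hφd s hs))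
      (fun s hs => (lyapunov_deriv_le_neg_mul_sub_sq (hγφ s hs) (hi s hs) (hii s hs)
        (hiii s hs)).trans (sub_le_self _ (sq_nonneg _))) ht
  have h0 : (0 : ℝ) ∈ Icc 0 T := left_mem_Icc.2 hT.le
  have hu0 : 0 ≤ v 0 + γ * φ 0 * w 0 ^ 2 :=
    add_nonneg (hv0 0 h0) (mul_nonneg (hγφ 0 h0) (sq_nonneg _))
  refine ⟨hdecrease, fun wplus hwplus hle => ?_, fun t ht => ?_⟩
  · have hT' : T ∈ Icc 0 T := right_mem_Icc.2 hT.le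
    linarith [hdecrease T hT', mul_sq_le_of_le_mul hcU.le hwplus hle htrans]
  · calc v t ≤ v t + γ * φ t * w t ^ 2 :=
          le_add_of_nonneg_right (mul_nonneg (hγφ t ht) (sq_nonneg _))
      _ ≤ exp (-ε * t) * (v 0 + γ * φ 0 * w 0 ^ 2) := hdecrease t ht
      _ ≤ max 1 (exp (-ε * T)) * (v 0 + γ * φ 0 * w 0 ^ 2) :=
        mul_le_mul_of_nonneg_right (exp_neg_mul_le_max_one ht) hu0
      _ < cX := hset

/-- Single-trajectory, single-mode reformulation of Proposition 2.1: under the flow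
conditions (i)–(iii) on `[0,T]`, the transition condition `γφ(T) ≥ λ²c_U`, and
`max{1, e^{−εT}}(v(0)+γφ(0)w(0)²) < c_X`, the function `u = v + γφw²` satisfies
(a) the decrease estimate (12) `u(t) ≤ e^{−εt}u(0)` on `[0,T]`,
(b) the post-jump estimate (13) `v(T) + c_U (w⁺)² ≤ e^{−εT}u(0)` for any
    `0 ≤ w⁺ ≤ λ w(T)`, and
(c) invariance of the sublevel set: `v(t) < c_X` on `[0,T]`. -/
theorem stmt_12 (ε γ L T lam cU cX : ℝ) (hγ : 0 < γ) (hT : 0 < T)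
    (hlam : lam ∈ Set.Ioo (0 : ℝ) 1) (hcU : 0 < cU) (hcX : 0 < cX)
    (v w φ h v' w' φ' : ℝ → ℝ)
    (hvd : ∀ t ∈ Set.Icc 0 T, HasDerivAt v (v' t) t)
    (hwd : ∀ t ∈ Set.Icc 0 T, HasDerivAt w (w' t) t)
    (hφd : ∀ t ∈ Set.Icc 0 T, HasDerivAt φ (φ' t) t)
    (hv0 : ∀ t ∈ Set.Icc 0 T, 0 ≤ v t)
    (hw0 : ∀ t ∈ Set.Icc 0 T, 0 ≤ w t)
    (hφ0 : ∀ t ∈ Set.Icc 0 T, 0 ≤ φ t)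
    (hi : ∀ t ∈ Set.Icc 0 T, v' t ≤ -ε * v t - (h t) ^ 2 + γ ^ 2 * (w t) ^ 2)
    (hii : ∀ t ∈ Set.Icc 0 T, 2 * w t * w' t ≤ 2 * L * (w t) ^ 2 + 2 * h t * w t)
    (hiii : ∀ t ∈ Set.Icc 0 T, φ' t = -2 * (L + ε / 2) * φ t - γ * ((φ t) ^ 2 + 1))
    (htrans : lam ^ 2 * cU ≤ γ * φ T)
    (hset : max 1 (Real.exp (-ε * T)) * (v 0 + γ * φ 0 * (w 0) ^ 2) < cX) :
    (∀ t ∈ Set.Icc 0 T,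
        v t + γ * φ t * (w t) ^ 2
          ≤ Real.exp (-ε * t) * (v 0 + γ * φ 0 * (w 0) ^ 2)) ∧
    (∀ wplus : ℝ, 0 ≤ wplus → wplus ≤ lam * w T →
        v T + cU * wplus ^ 2
          ≤ Real.exp (-ε * T) * (v 0 + γ * φ 0 * (w 0) ^ 2)) ∧
    (∀ t ∈ Set.Icc 0 T, v t < cX) :=
  stmt_12_general ε γ L T lam cU cX hγ hT hcU v w φ h v' w' φ' hvd hwd hφd hv0 hφ0 hi hii hiii
    htrans hset
end
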